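/- The minimum in the definition of the order of a Rees algebra at a point, ord_A(p) = min_{i>0} ord_p(A_i)/i, is attained at some degree i belonging to any set of generating degrees of A. -/

import Mathlib

/-
Let `n ∈ K` minimise the slope `ord(A j) / j` over the generating degrees, and call that slope `r`.
Every `A i` with `i > 0` is a sum of products `A j₁ ⋯ A jₘ` with `jₖ ∈ K` and `Σ jₖ = i`. The order is
superadditive on products and the order of a sum is at least the least order of its summands, so
`ord(A i) ≥ Σ ord(A jₖ) ≥ r · Σ jₖ = r · i`.
-/

/-- The order of an ideal `I` in a local ring: the largest `n` with `I ⊆ m^n`. -/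
noncomputable def idealOrd {R : Type*} [CommRing R] [IsLocalRing R] (I : Ideal R) : ℕ∞ :=
  ⨆ n ∈ {n : ℕ | I ≤ IsLocalRing.maximalIdeal R ^ n}, (n : ℕ∞)

/-- `A` is generated in the degrees of the finite set `K`. -/
def HasGeneratingDegrees {R : Type*} [CommRing R] (A : ℕ → Ideal R) (K : Finset ℕ) : Prop :=
  ∀ i : ℕ, 0 < i →
    A i = ⨆ (s : Multiset ℕ) (_ : ∀ j ∈ s, j ∈ K) (_ : s.sum = i), (s.map A).prod

open IsLocalRing

theorem Finset.exists_mem_forall_mul_le_mul (f : ℕ → ℕ∞) (K : Finset ℕ) (hKne : K.Nonempty)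
    (hKpos : ∀ j ∈ K, 0 < j) : ∃ n ∈ K, ∀ j ∈ K, f n * j ≤ f j * n := by
  obtain ⟨n, hnK, hmin⟩ :=
    K.exists_min_image (fun j => (f j : ENNReal) / j) hKne
  refine ⟨n, hnK, fun j hjK => ?_⟩
  have hslope : ∀ k ∈ K, (f k : ENNReal) = (f k : ENNReal) / k * k := fun k hk =>
    (ENNReal.div_mul_cancel (by exact_mod_cast (hKpos k hk).ne') (ENNReal.natCast_ne_top k)).symm
  rw [← ENat.toENNReal_le, ENat.toENNReal_mul, ENat.toENNReal_mul, ENat.toENNReal_coe,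
    ENat.toENNReal_coe, hslope n hnK, hslope j hjK, mul_right_comm _ (n : ENNReal)]
  exact mul_le_mul_left (mul_le_mul_left (hmin j hjK) _) _

section idealOrd

variable {R : Type*} [CommRing R] [IsLocalRing R]

theorem natCast_le_idealOrd_iff {I : Ideal R} {m : ℕ} :
    (m : ℕ∞) ≤ idealOrd I ↔ I ≤ maximalIdeal R ^ m := by
  refine ⟨fun h => ?_, fun h => le_iSup₂ (f := fun p (_ : p ∈ {p : ℕ | I ≤ maximalIdeal R ^ p}) =>
    (p : ℕ∞)) m h⟩
  cases m with
  | zero => simp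
  | succ m =>
    obtain ⟨p, hp, hmp⟩ := lt_biSup_iff.1 ((ENat.natCast_lt_natCast.2 m.lt_succ_self).trans_le h)
    exact hp.trans (Ideal.pow_le_pow_right (Order.add_one_le_of_lt (ENat.natCast_lt_natCast.1 hmp)))

theorem add_idealOrd_le_idealOrd_mul (I J : Ideal R) :
    idealOrd I + idealOrd J ≤ idealOrd (I * J) :=
  ENat.biSup_add_biSup_le ⟨0, by simp⟩ ⟨0, by simp⟩ fun p hp q hq => by
    rw [← Nat.cast_add, natCast_le_idealOrd_iff, pow_add]
    exact Ideal.mul_mono hp hq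

theorem sum_idealOrd_le_idealOrd_prod (s : Multiset (Ideal R)) :
    (s.map idealOrd).sum ≤ idealOrd s.prod := by
  induction s using Multiset.induction with
  | empty => simp
  | cons I s ih =>
    rw [Multiset.map_cons, Multiset.sum_cons, Multiset.prod_cons]
    exact (add_le_add le_rfl ih).trans (add_idealOrd_le_idealOrd_mul I s.prod)

theorem iInf_idealOrd_le_idealOrd_iSup {ι : Sort*} (I : ι → Ideal R) :
    ⨅ s, idealOrd (I s) ≤ idealOrd (⨆ s, I s) :=
  ENat.forall_natCast_le_iff_le.1 fun _ hm => natCast_le_idealOrd_iff.2 <|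
    iSup_le fun s => natCast_le_idealOrd_iff.1 (hm.trans (iInf_le _ s))

theorem le_idealOrd_iSup_mul {ι : Sort*} {I : ι → Ideal R} {x : ℕ∞} {n : ℕ} (hn : n ≠ 0)
    (h : ∀ s, x ≤ idealOrd (I s) * n) : x ≤ idealOrd (⨆ s, I s) * n :=
  calc x ≤ ⨅ s, idealOrd (I s) * n := le_iInf h
    _ = (⨅ s, idealOrd (I s)) * n := (ENat.iInf_mul_of_ne (by exact_mod_cast hn)).symm
    _ ≤ idealOrd (⨆ s, I s) * n := mul_le_mul_left (iInf_idealOrd_le_idealOrd_iSup I) _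

theorem HasGeneratingDegrees.mul_le_idealOrd_mul {A : ℕ → Ideal R} {K : Finset ℕ}
    (hgen : HasGeneratingDegrees A K) {a : ℕ∞} {n : ℕ} (hn : n ≠ 0)
    (hK : ∀ j ∈ K, a * j ≤ idealOrd (A j) * n) {i : ℕ} (hi : 0 < i) :
    a * i ≤ idealOrd (A i) * n := by
  rw [hgen i hi]
  refine le_idealOrd_iSup_mul hn fun s => le_idealOrd_iSup_mul hn fun hsK =>
    le_idealOrd_iSup_mul hn fun hsum => ?_
  calc a * i = (s.map fun j : ℕ => a * j).sum := by
        rw [Multiset.sum_map_mul_left, ← hsum, Nat.cast_multiset_sum]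
    _ ≤ (s.map fun j => idealOrd (A j) * n).sum :=
        Multiset.sum_map_le_sum_map _ _ fun j hj => hK j (hsK j hj)
    _ = ((s.map A).map idealOrd).sum * n := by
        rw [Multiset.sum_map_mul_right, Multiset.map_map]; rfl
    _ ≤ idealOrd (s.map A).prod * n :=
        mul_le_mul_left (sum_idealOrd_le_idealOrd_prod _) _

end idealOrd

theorem rees_order_min_attained_at_generating_degree_general
    {R : Type*} [CommRing R] [IsLocalRing R]
    (A : ℕ → Ideal R)
    (K : Finset ℕ) (hKne : K.Nonempty) (hKpos : ∀ j ∈ K, 0 < j)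
    (hgen : HasGeneratingDegrees A K) :
    ∃ n ∈ K, ∀ i : ℕ, 0 < i →
      idealOrd (A n) * (i : ℕ∞) ≤ idealOrd (A i) * (n : ℕ∞) := by
  obtain ⟨n, hnK, hmin⟩ := K.exists_mem_forall_mul_le_mul (fun j => idealOrd (A j)) hKne hKpos
  exact ⟨n, hnK, fun i hi => hgen.mul_le_idealOrd_mul (hKpos n hnK).ne' hmin hi⟩

/-- the minimum in the definition of the order of a Rees algebra at
a point, `ord_A(p) = min_{i>0} ord_p(A i)/i`, is attained at a degree belonging to
any set of generating degrees: there is `n ∈ K` with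
`ord_p(A n)/n ≤ ord_p(A i)/i` for all `i > 0` (stated by cross-multiplication in
`ℕ∞`). -/
theorem rees_order_min_attained_at_generating_degree
    {R : Type*} [CommRing R] [IsLocalRing R]
    (A : ℕ → Ideal R) (hA0 : A 0 = ⊤) (hAmul : ∀ i j, A i * A j ≤ A (i + j))
    (K : Finset ℕ) (hKne : K.Nonempty) (hKpos : ∀ j ∈ K, 0 < j)
    (hgen : HasGeneratingDegrees A K) :
    ∃ n ∈ K, ∀ i : ℕ, 0 < i →
      idealOrd (A n) * (i : ℕ∞) ≤ idealOrd (A i) * (n : ℕ∞) :=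
  rees_order_min_attained_at_generating_degree_general A K hKne hKpos hgen
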